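/- Averages of the undephased qubit engine: in the qubit Otto setup, the undephased average heat released, heat absorbed, and work satisfy Tr[ρ₁ H₁] − Tr[V Φ(U ρ₁ U†) V† H₁] = −2ζᶜ ν₁ tanh(βν₁), Tr[Φ(U ρ₁ U†) H₂] − Tr[U ρ₁ U† H₂] = 2(θ_c − δ′) ν₂ tanh(βν₁), and hence ⟨W⟩ = ⟨Q_M⟩ + ⟨Q_C⟩ = 2((θ_c − δ′)ν₂ − ζᶜν₁) tanh(βν₁). -/

import Mathlib

/-! Since `e₊e₊† + e₋e₋† = 1`, the Gibbs state is `ρ₁ = b • 1 - tanh(βν₁) • e₊e₊†` for a scalar `b`.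
Unitary conjugation and unital channels fix `1` and preserve the trace, so every state of the
cycle has the form `b • 1 - tanh(βν₁) • Y` with `Tr Y = 1`. Against `ν • (F - G)` with
`F + G = 1`, two such states differ in energy by `-2 tanh(βν₁) ν (Tr(Y' G) - Tr(Y G))`, and the
overlaps `Tr(Y G)` are `ζᶜ`, `0`, `θ_c` and `|f₋† U e₊|²`; the last equals `δ′ = |f₊† U e₋|²`
by completeness of both bases. -/

open Matrix

section
variable {n R : Type*} [Fintype n] [CommRing R]

theorem trace_mul_vecMulVec (M : Matrix n n R) (v w : n → R) :
    trace (M * vecMulVec v w) = w ⬝ᵥ (M *ᵥ v) := by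
  rw [mul_vecMulVec, trace_vecMulVec, dotProduct_comm]

theorem trace_mul_eq_of_add_eq_one [DecidableEq n] {A A' B B' : Matrix n n R}
    (hA : A + A' = 1) (hB : B + B' = 1) :
    trace (A * B) = trace (A' * B') + trace A + trace B - trace (1 : Matrix n n R) := by
  rw [eq_sub_of_add_eq hA, eq_sub_of_add_eq hB]
  simp only [sub_mul, mul_sub, one_mul, mul_one, trace_sub]
  ring

theorem trace_sub_trace_mul_smul_sub_of_add_eq_one [DecidableEq n] {F G : Matrix n n R}
    (hFG : F + G = 1) {Y Y' : Matrix n n R} (hY : trace Y = trace Y') (b c ν : R) :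
    trace ((b • 1 + c • Y) * (ν • (F - G))) - trace ((b • 1 + c • Y') * (ν • (F - G))) =
      2 * c * ν * (trace (Y' * G) - trace (Y * G)) := by
  rw [← trace_sub, ← sub_mul, add_sub_add_left_eq_sub, ← smul_sub, eq_sub_of_add_eq hFG]
  simp only [smul_mul_smul_comm, sub_mul, mul_sub, mul_one, trace_smul, trace_sub, smul_eq_mul]
  linear_combination c * ν * hY

end

section
variable {n R : Type*} [Fintype n] [CommRing R] [StarRing R]

theorem sum_vecMulVec_star_eq_one [DecidableEq n] (v : n → n → R)
    (hv : ∀ i j, star (v i) ⬝ᵥ v j = if i = j then 1 else 0) :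
    ∑ i, vecMulVec (v i) (star (v i)) = 1 := by
  set A : Matrix n n R := (of v)ᵀ
  have hA : Aᴴ * A = 1 := by
    ext i j
    simpa [A, mul_apply, one_apply, dotProduct] using hv i j
  rw [← mul_eq_one_comm.mp hA]
  ext r s
  simp [A, mul_apply, vecMulVec_apply, Matrix.sum_apply]

theorem vecMulVec_add_vecMulVec_eq_one {a b : Fin 2 → R} (ha : star a ⬝ᵥ a = 1)
    (hb : star b ⬝ᵥ b = 1) (hab : star a ⬝ᵥ b = 0) :
    vecMulVec a (star a) + vecMulVec b (star b) = 1 := by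
  have hba : star b ⬝ᵥ a = 0 := by rw [star_dotProduct, hab, star_zero]
  simpa [Fin.sum_univ_two] using sum_vecMulVec_star_eq_one ![a, b] <| by
    intro i j; fin_cases i <;> fin_cases j <;> simp [ha, hb, hab, hba]

theorem trace_vecMulVec_star (v : n → R) : trace (vecMulVec v (star v)) = star v ⬝ᵥ v := by
  rw [trace_vecMulVec, dotProduct_comm]

theorem mul_vecMulVec_star_mul_conjTranspose (U : Matrix n n R) (v : n → R) :
    U * vecMulVec v (star v) * Uᴴ = vecMulVec (U *ᵥ v) (star (U *ᵥ v)) := by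
  rw [mul_vecMulVec, vecMulVec_mul, star_mulVec]

theorem mul_smul_one_add_smul_mul_conjTranspose [DecidableEq n] {U : Matrix n n R}
    (hU : U * Uᴴ = 1) (b c : R) (Y : Matrix n n R) :
    U * (b • 1 + c • Y) * Uᴴ = b • 1 + c • (U * Y * Uᴴ) := by
  simp [mul_add, add_mul, hU, Matrix.mul_assoc]

theorem trace_mul_mul_conjTranspose [DecidableEq n] {U : Matrix n n R} (hU : Uᴴ * U = 1)
    (X : Matrix n n R) : trace (U * X * Uᴴ) = trace X := by
  rw [trace_mul_cycle, hU, one_mul]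

variable {ι : Type*} [Fintype ι]

def krausMap (Kr : ι → Matrix n n R) (X : Matrix n n R) : Matrix n n R :=
  ∑ k, Kr k * X * (Kr k)ᴴ

theorem krausMap_smul_one_add_smul [DecidableEq n] {Kr : ι → Matrix n n R}
    (hKr : ∑ k, Kr k * (Kr k)ᴴ = 1) (b c : R) (Y : Matrix n n R) :
    krausMap Kr (b • 1 + c • Y) = b • 1 + c • krausMap Kr Y := by
  simp [krausMap, mul_add, add_mul, Finset.sum_add_distrib, ← Finset.smul_sum, hKr]

theorem trace_krausMap [DecidableEq n] {Kr : ι → Matrix n n R}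
    (hKr : ∑ k, (Kr k)ᴴ * Kr k = 1) (X : Matrix n n R) : trace (krausMap Kr X) = trace X := by
  simp_rw [krausMap, trace_sum, trace_mul_cycle _ X, ← trace_sum, ← Finset.sum_mul, hKr,
    one_mul]

end

theorem trace_vecMulVec_star_mul_vecMulVec_star {n 𝕜 : Type*} [Fintype n] [RCLike 𝕜]
    (w x : n → 𝕜) :
    trace (vecMulVec w (star w) * vecMulVec x (star x)) = ((‖star x ⬝ᵥ w‖ ^ 2 : ℝ) : 𝕜) := by
  rw [vecMulVec_mul_vecMulVec, trace_vecMulVec, dotProduct_smul, dotProduct_comm w,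
    star_dotProduct, smul_eq_mul, RCLike.ofReal_pow, ← RCLike.conj_mul, RCLike.star_def]

theorem twoLevel_gibbs_eq {n : Type*} [Fintype n] [DecidableEq n] {P Q : Matrix n n ℂ}
    (hPQ : P + Q = 1) (x : ℝ) :
    ((2 * Real.cosh x : ℝ) : ℂ)⁻¹ • ((Real.exp (-x) : ℂ) • P + (Real.exp x : ℂ) • Q) =
      (((2 * Real.cosh x)⁻¹ * Real.exp x : ℝ) : ℂ) • 1 + (-Real.tanh x : ℂ) • P := by
  have h : (2 * Real.cosh x)⁻¹ * Real.exp (-x) - (2 * Real.cosh x)⁻¹ * Real.exp x =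
      -Real.tanh x := by
    rw [Real.tanh_eq_sinh_div_cosh, Real.sinh_eq, Real.cosh_eq]
    field_simp
    ring
  have hC : ((2 * Real.cosh x : ℝ) : ℂ)⁻¹ * (Real.exp (-x) : ℂ) -
      ((2 * Real.cosh x : ℝ) : ℂ)⁻¹ * (Real.exp x : ℂ) = -Real.tanh x := by
    exact_mod_cast h
  rw [eq_sub_of_add_eq' hPQ]
  linear_combination (norm := module) hC • P

theorem sq_norm_star_dotProduct_mulVec_eq_of_orthonormal {𝕜 : Type*} [RCLike 𝕜]
    {U : Matrix (Fin 2) (Fin 2) 𝕜} (hU : Uᴴ * U = 1) (hU' : U * Uᴴ = 1) {ep em fp fm : Fin 2 → 𝕜}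
    (hep : star ep ⬝ᵥ ep = 1) (hem : star em ⬝ᵥ em = 1) (hepm : star ep ⬝ᵥ em = 0)
    (hfp : star fp ⬝ᵥ fp = 1) (hfm : star fm ⬝ᵥ fm = 1) (hfpm : star fp ⬝ᵥ fm = 0) :
    ‖star fm ⬝ᵥ (U *ᵥ ep)‖ ^ 2 = ‖star fp ⬝ᵥ (U *ᵥ em)‖ ^ 2 := by
  have hUPQ : U * vecMulVec ep (star ep) * Uᴴ + U * vecMulVec em (star em) * Uᴴ = 1 := by
    rw [← Matrix.add_mul, ← Matrix.mul_add, vecMulVec_add_vecMulVec_eq_one hep hem hepm, mul_one,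
      hU']
  have hGF := (add_comm _ _).trans (vecMulVec_add_vecMulVec_eq_one hfp hfm hfpm)
  have h := trace_mul_eq_of_add_eq_one hUPQ hGF
  rw [trace_mul_mul_conjTranspose hU, trace_vecMulVec_star, trace_vecMulVec_star, hep, hfm,
    trace_one, Fintype.card_fin, mul_vecMulVec_star_mul_conjTranspose,
    mul_vecMulVec_star_mul_conjTranspose, trace_vecMulVec_star_mul_vecMulVec_star,
    trace_vecMulVec_star_mul_vecMulVec_star] at h
  apply RCLike.ofReal_injective (K := 𝕜)
  rw [h]
  ring

theorem undephased_averages_qubit_general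
    (β ν₁ ν₂ : ℝ)
    (ep em fp fm : Fin 2 → ℂ)
    (hep : star ep ⬝ᵥ ep = 1) (hem : star em ⬝ᵥ em = 1) (hepm : star ep ⬝ᵥ em = 0)
    (hfp : star fp ⬝ᵥ fp = 1) (hfm : star fm ⬝ᵥ fm = 1) (hfpm : star fp ⬝ᵥ fm = 0)
    (H₁ H₂ ρ₁ : Matrix (Fin 2) (Fin 2) ℂ)
    (hH₁ : H₁ = (ν₁ : ℂ) • (vecMulVec ep (star ep) - vecMulVec em (star em)))
    (hH₂ : H₂ = (ν₂ : ℂ) • (vecMulVec fp (star fp) - vecMulVec fm (star fm)))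
    (hρ₁ : ρ₁ = ((2 * Real.cosh (β * ν₁) : ℝ) : ℂ)⁻¹ •
        ((Real.exp (-(β * ν₁)) : ℂ) • vecMulVec ep (star ep) +
         (Real.exp (β * ν₁) : ℂ) • vecMulVec em (star em)))
    (U V : Matrix (Fin 2) (Fin 2) ℂ)
    (hU : Uᴴ * U = 1) (hU' : U * Uᴴ = 1)
    (hV : Vᴴ * V = 1) (hV' : V * Vᴴ = 1)
    {K : ℕ} (Kr : Fin K → Matrix (Fin 2) (Fin 2) ℂ)
    (hKr : ∑ k, (Kr k)ᴴ * Kr k = 1) (hKr' : ∑ k, Kr k * (Kr k)ᴴ = 1)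
    (Φ : Matrix (Fin 2) (Fin 2) ℂ → Matrix (Fin 2) (Fin 2) ℂ)
    (hΦ : ∀ X, Φ X = ∑ k, Kr k * X * (Kr k)ᴴ)
    (δ' : ℝ) (hδ' : δ' = ‖star fp ⬝ᵥ (U *ᵥ em)‖ ^ 2)
    (θc : ℂ) (hθc : θc = star fm ⬝ᵥ (Φ (U * vecMulVec ep (star ep) * Uᴴ) *ᵥ fm))
    (ζc : ℂ) (hζc : ζc = star em ⬝ᵥ ((V * Φ (U * vecMulVec ep (star ep) * Uᴴ) * Vᴴ) *ᵥ em)) :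
    (ρ₁ * H₁).trace - (V * Φ (U * ρ₁ * Uᴴ) * Vᴴ * H₁).trace =
        -2 * ζc * (ν₁ : ℂ) * (Real.tanh (β * ν₁) : ℂ) ∧
    (Φ (U * ρ₁ * Uᴴ) * H₂).trace - (U * ρ₁ * Uᴴ * H₂).trace =
        2 * (θc - (δ' : ℂ)) * (ν₂ : ℂ) * (Real.tanh (β * ν₁) : ℂ) ∧
    ((Φ (U * ρ₁ * Uᴴ) * H₂).trace - (U * ρ₁ * Uᴴ * H₂).trace) +
      ((ρ₁ * H₁).trace - (V * Φ (U * ρ₁ * Uᴴ) * Vᴴ * H₁).trace) =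
        2 * ((θc - (δ' : ℂ)) * (ν₂ : ℂ) - ζc * (ν₁ : ℂ)) * (Real.tanh (β * ν₁) : ℂ) := by
  set P := vecMulVec ep (star ep)
  set Q := vecMulVec em (star em)
  set G := vecMulVec fm (star fm)
  have hPQ : P + Q = 1 := vecMulVec_add_vecMulVec_eq_one hep hem hepm
  have hFG := vecMulVec_add_vecMulVec_eq_one hfp hfm hfpm
  obtain rfl : Φ = krausMap Kr := funext hΦ
  set X := U * P * Uᴴ
  set N := krausMap Kr X
  set M := V * N * Vᴴ
  set c : ℂ := -Real.tanh (β * ν₁)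
  obtain ⟨b, hρ⟩ : ∃ b : ℂ, ρ₁ = b • 1 + c • P := ⟨_, hρ₁.trans (twoLevel_gibbs_eq hPQ _)⟩
  have hUρ : U * ρ₁ * Uᴴ = b • 1 + c • X := by
    rw [hρ, mul_smul_one_add_smul_mul_conjTranspose hU']
  have hΦρ : krausMap Kr (U * ρ₁ * Uᴴ) = b • 1 + c • N := by
    rw [hUρ, krausMap_smul_one_add_smul hKr']
  have hVΦρ : V * krausMap Kr (U * ρ₁ * Uᴴ) * Vᴴ = b • 1 + c • M := by
    rw [hΦρ, mul_smul_one_add_smul_mul_conjTranspose hV']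
  have htrNX : trace N = trace X := trace_krausMap hKr X
  have htrMP : trace M = trace P := by
    rw [trace_mul_mul_conjTranspose hV, htrNX, trace_mul_mul_conjTranspose hU]
  have hPQ0 : trace (P * Q) = 0 := by
    rw [trace_mul_comm, trace_vecMulVec_star_mul_vecMulVec_star, hepm, norm_zero]
    norm_num
  have hXG : trace (X * G) = δ' := by
    simp only [X, P]
    rw [mul_vecMulVec_star_mul_conjTranspose, trace_vecMulVec_star_mul_vecMulVec_star, hδ',
      sq_norm_star_dotProduct_mulVec_eq_of_orthonormal hU hU' hep hem hepm hfp hfm hfpm]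
    norm_cast
  have e1 : (ρ₁ * H₁).trace - (V * krausMap Kr (U * ρ₁ * Uᴴ) * Vᴴ * H₁).trace =
      -2 * ζc * ν₁ * Real.tanh (β * ν₁) := by
    rw [hVΦρ, hρ, hH₁, trace_sub_trace_mul_smul_sub_of_add_eq_one hPQ htrMP.symm, hPQ0, hζc,
      ← trace_mul_vecMulVec]
    ring
  have e2 : (krausMap Kr (U * ρ₁ * Uᴴ) * H₂).trace - (U * ρ₁ * Uᴴ * H₂).trace =
      2 * (θc - δ') * ν₂ * Real.tanh (β * ν₁) := by
    rw [hΦρ, hUρ, hH₂, trace_sub_trace_mul_smul_sub_of_add_eq_one hFG htrNX, hXG, hθc,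
      ← trace_mul_vecMulVec]
    ring
  exact ⟨e1, e2, by rw [e1, e2]; ring⟩

/-- Averages of the undephased qubit engine: in the qubit Otto setup the
undephased average heat released, heat absorbed, and work satisfy
`Tr[ρ₁ H₁] − Tr[V Φ(U ρ₁ Uᴴ) Vᴴ H₁] = −2 ζᶜ ν₁ tanh(βν₁)`,
`Tr[Φ(U ρ₁ Uᴴ) H₂] − Tr[U ρ₁ Uᴴ H₂] = 2 (θ_c − δ′) ν₂ tanh(βν₁)`, and hence
`⟨W⟩ = ⟨Q_M⟩ + ⟨Q_C⟩ = 2 ((θ_c − δ′) ν₂ − ζᶜ ν₁) tanh(βν₁)`. -/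
theorem undephased_averages_qubit
    (β ν₁ ν₂ : ℝ) (hβ : 0 < β) (hν₁ : 0 < ν₁) (hν₂ : 0 < ν₂)
    (ep em fp fm : Fin 2 → ℂ)
    (hep : star ep ⬝ᵥ ep = 1) (hem : star em ⬝ᵥ em = 1) (hepm : star ep ⬝ᵥ em = 0)
    (hfp : star fp ⬝ᵥ fp = 1) (hfm : star fm ⬝ᵥ fm = 1) (hfpm : star fp ⬝ᵥ fm = 0)
    (H₁ H₂ ρ₁ : Matrix (Fin 2) (Fin 2) ℂ)
    (hH₁ : H₁ = (ν₁ : ℂ) • (vecMulVec ep (star ep) - vecMulVec em (star em)))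
    (hH₂ : H₂ = (ν₂ : ℂ) • (vecMulVec fp (star fp) - vecMulVec fm (star fm)))
    (hρ₁ : ρ₁ = ((2 * Real.cosh (β * ν₁) : ℝ) : ℂ)⁻¹ •
        ((Real.exp (-(β * ν₁)) : ℂ) • vecMulVec ep (star ep) +
         (Real.exp (β * ν₁) : ℂ) • vecMulVec em (star em)))
    (U V : Matrix (Fin 2) (Fin 2) ℂ)
    (hU : Uᴴ * U = 1) (hU' : U * Uᴴ = 1)
    (hV : Vᴴ * V = 1) (hV' : V * Vᴴ = 1)
    {K : ℕ} (Kr : Fin K → Matrix (Fin 2) (Fin 2) ℂ)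
    (hKr : ∑ k, (Kr k)ᴴ * Kr k = 1) (hKr' : ∑ k, Kr k * (Kr k)ᴴ = 1)
    (Φ : Matrix (Fin 2) (Fin 2) ℂ → Matrix (Fin 2) (Fin 2) ℂ)
    (hΦ : ∀ X, Φ X = ∑ k, Kr k * X * (Kr k)ᴴ)
    (δ' : ℝ) (hδ' : δ' = ‖star fp ⬝ᵥ (U *ᵥ em)‖ ^ 2)
    (θc : ℂ) (hθc : θc = star fm ⬝ᵥ (Φ (U * vecMulVec ep (star ep) * Uᴴ) *ᵥ fm))
    (ζc : ℂ) (hζc : ζc = star em ⬝ᵥ ((V * Φ (U * vecMulVec ep (star ep) * Uᴴ) * Vᴴ) *ᵥ em)) :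
    (ρ₁ * H₁).trace - (V * Φ (U * ρ₁ * Uᴴ) * Vᴴ * H₁).trace =
        -2 * ζc * (ν₁ : ℂ) * (Real.tanh (β * ν₁) : ℂ) ∧
    (Φ (U * ρ₁ * Uᴴ) * H₂).trace - (U * ρ₁ * Uᴴ * H₂).trace =
        2 * (θc - (δ' : ℂ)) * (ν₂ : ℂ) * (Real.tanh (β * ν₁) : ℂ) ∧
    ((Φ (U * ρ₁ * Uᴴ) * H₂).trace - (U * ρ₁ * Uᴴ * H₂).trace) +
      ((ρ₁ * H₁).trace - (V * Φ (U * ρ₁ * Uᴴ) * Vᴴ * H₁).trace) =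
        2 * ((θc - (δ' : ℂ)) * (ν₂ : ℂ) - ζc * (ν₁ : ℂ)) * (Real.tanh (β * ν₁) : ℂ) :=
  undephased_averages_qubit_general β ν₁ ν₂ ep em fp fm hep hem hepm hfp hfm hfpm H₁ H₂ ρ₁ hH₁ hH₂
    hρ₁ U V hU hU' hV hV' Kr hKr hKr' Φ hΦ δ' hδ' θc hθc ζc hζc
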